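/- Let r_1, ..., r_n be i.i.d. random vectors in ℝ^N whose components are i.i.d. real random variables with mean 0, variance 1, and E[e^{t r}] ≤ e^{t² / 2} for all t ∈ ℝ (1-subgaussian). Let v ∈ ℝ^N be nonzero. Then for every δ with 0 < δ ≤ ‖v‖², P[ (1/n) Σ_{j=1}^n (r_j · v)² − ‖v‖² > δ ] ≤ exp( −n δ² / (8 ‖v‖⁴) ), where r_j · v is the Euclidean inner product and ‖·‖ the Euclidean norm. -/

import Mathlib

/-!
Each row sum `Zⱼ = ∑ᵢ rⱼᵢ vᵢ` is `‖v‖²`-subgaussian. Up to the factor `√(2π)`, `exp (t Z²)` is the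
average of `exp (√(2t) Z g - g²/2)` over `g ∈ ℝ`; exchanging this average with the expectation in
`Z` gives the Gaussian-comparison bound `E[exp (t Z²)] ≤ (1 - 2t‖v‖²)^(-1/2)`. The rows are
independent, so the Chernoff bound for `∑ⱼ Zⱼ²` at level `n (δ + ‖v‖²)` is `exp (-n f(t))` with
`f(t) = t (δ + ‖v‖²) + ½ log (1 - 2t‖v‖²)`, and `f(δ / (2‖v‖²(δ + ‖v‖²))) ≥ δ² / (8‖v‖⁴)` because
`log (1 + x) ≤ x - x²/4` on `[0, 1]`.
-/

open MeasureTheory ProbabilityTheory Real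
open scoped NNReal ENNReal

lemma lintegral_exp_mul_sub_sq_half (s : ℝ) :
    ∫⁻ g, ENNReal.ofReal (exp (s * g - g ^ 2 / 2)) =
      ENNReal.ofReal (√(2 * π) * exp (s ^ 2 / 2)) := by
  have hsq : (fun g ↦ exp (s * g - g ^ 2 / 2)) =
      fun g ↦ exp (-2⁻¹ * (g - s) ^ 2) * exp (s ^ 2 / 2) := by
    ext g; rw [← exp_add]; ring_nf
  have hint : Integrable fun g ↦ exp (-2⁻¹ * (g - s) ^ 2) * exp (s ^ 2 / 2) :=
    ((integrable_exp_neg_mul_sq (by norm_num : (0 : ℝ) < 2⁻¹)).comp_sub_right s).mul_const _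
  rw [← ofReal_integral_eq_lintegral_ofReal (hsq ▸ hint) (ae_of_all _ fun _ ↦ (exp_pos _).le),
    hsq, integral_mul_const, integral_sub_right_eq_self (fun g ↦ exp (-2⁻¹ * g ^ 2)),
    integral_gaussian]
  norm_num [mul_comm]

lemma one_add_le_exp_sub_sq_div_four {x : ℝ} (hx0 : 0 ≤ x) (hx1 : x ≤ 1) :
    1 + x ≤ exp (x - x ^ 2 / 4) := by
  have hy : 0 ≤ x - x ^ 2 / 4 := by nlinarith
  nlinarith [quadratic_le_exp_of_nonneg hy, mul_nonneg (sq_nonneg x) (sub_nonneg.2 hx1)]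

lemma exp_neg_mul_mul_one_div_sqrt_le {a δ : ℝ} (ha : 0 < a) (hδ0 : 0 ≤ δ) (hδa : δ ≤ a) :
    exp (-(δ / (2 * a * (δ + a))) * (δ + a)) * (1 / √(1 - 2 * (δ / (2 * a * (δ + a))) * a))
      ≤ exp (-δ ^ 2 / (8 * a ^ 2)) := by
  set x := δ / a with hx
  have hδa' : 0 < δ + a := by linarith
  have h1 : -(δ / (2 * a * (δ + a))) * (δ + a) = -(x / 2) := by rw [hx]; field_simp
  have h2 : 1 - 2 * (δ / (2 * a * (δ + a))) * a = (1 + x)⁻¹ := by rw [hx]; field_simp; ring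
  have h3 : -δ ^ 2 / (8 * a ^ 2) = -(x / 2) + (x - x ^ 2 / 4) / 2 := by rw [hx]; field_simp; ring
  rw [h1, h2, h3, exp_add, one_div, sqrt_inv, inv_inv, exp_half]
  gcongr
  exact one_add_le_exp_sub_sq_div_four (by positivity) ((div_le_one ha).2 hδa)

lemma natCast_mul_add_le_of_lt_one_div_mul_sub {n : ℕ} {δ a S : ℝ} (hS : 0 ≤ S)
    (h : δ < 1 / n * S - a) : n * (δ + a) ≤ S := by
  rcases Nat.eq_zero_or_pos n with rfl | hn
  · simpa using hS
  · rw [one_div, inv_mul_eq_div, lt_sub_iff_add_lt, lt_div_iff₀ (by positivity)] at h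
    linarith

namespace ProbabilityTheory

variable {Ω : Type*} [MeasurableSpace Ω] {μ : Measure Ω} {c : ℝ≥0} {t : ℝ}

lemma iIndepFun.curry {ι κ 𝓧 : Type*} [MeasurableSpace 𝓧] {X : ι → κ → Ω → 𝓧}
    (mX : ∀ i j, Measurable (X i j)) (h : iIndepFun (fun p : ι × κ ↦ X p.1 p.2) μ) :
    iIndepFun (fun i ω j ↦ X i j ω) μ := by
  have := h.isProbabilityMeasure
  have hrow : ∀ i, μ.map (fun ω j ↦ X i j ω) = Measure.infinitePi fun j ↦ μ.map (X i j) :=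
    fun i ↦ (h.precomp (Prod.mk_right_injective i)).map_fun_eq_infinitePi_map (mX i)
  rw [iIndepFun_iff_map_fun_eq_infinitePi_map (fun i ↦ by fun_prop)]
  calc μ.map (fun ω i j ↦ X i j ω)
      = (μ.map fun ω (p : ι × κ) ↦ X p.1 p.2 ω).map (MeasurableEquiv.curry ι κ 𝓧) := by
        rw [Measure.map_map (by fun_prop) (by fun_prop)]; rfl
    _ = Measure.infinitePi fun i ↦ Measure.infinitePi fun j ↦ μ.map (X i j) := by
        rw [show μ.map (fun ω (p : ι × κ) ↦ X p.1 p.2 ω) = _ from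
          h.map_fun_eq_infinitePi_map fun p ↦ mX p.1 p.2]
        have _ (i : ι) (j : κ) := Measure.isProbabilityMeasure_map (μ := μ) (mX i j).aemeasurable
        exact Measure.infinitePi_map_curry fun i j ↦ μ.map (X i j)
    _ = Measure.infinitePi fun i ↦ μ.map (fun ω j ↦ X i j ω) := by simp_rw [hrow]

namespace HasSubgaussianMGF

variable {X : Ω → ℝ}

lemma isFiniteMeasure (h : HasSubgaussianMGF X c μ) : IsFiniteMeasure μ := by
  simpa [integrable_const_iff] using h.integrable_exp_mul 0

lemma lintegral_exp_mul_mul_sub_sq_half_le (h : HasSubgaussianMGF X c μ) (s g : ℝ) :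
    ∫⁻ ω, ENNReal.ofReal (exp (s * X ω * g - g ^ 2 / 2)) ∂μ ≤
      ENNReal.ofReal (exp (-((1 - c * s ^ 2) / 2) * g ^ 2)) := by
  have hfac (ω : Ω) :
      exp (s * X ω * g - g ^ 2 / 2) = exp (s * g * X ω) * exp (-(g ^ 2 / 2)) := by
    rw [← exp_add]; ring_nf
  simp_rw [hfac]
  rw [← ofReal_integral_eq_lintegral_ofReal ((h.integrable_exp_mul _).mul_const _)
    (ae_of_all _ fun _ ↦ by positivity), integral_mul_const]
  refine ENNReal.ofReal_le_ofReal ?_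
  calc (∫ ω, exp (s * g * X ω) ∂μ) * exp (-(g ^ 2 / 2))
      ≤ exp (c * (s * g) ^ 2 / 2) * exp (-(g ^ 2 / 2)) := by gcongr; exact h.mgf_le _
    _ = exp (-((1 - c * s ^ 2) / 2) * g ^ 2) := by rw [← exp_add]; ring_nf

lemma lintegral_exp_mul_sq_le (h : HasSubgaussianMGF X c μ) (ht : 0 ≤ t)
    (htc : 2 * t * c < 1) :
    ∫⁻ ω, ENNReal.ofReal (exp (t * X ω ^ 2)) ∂μ ≤ ENNReal.ofReal (1 / √(1 - 2 * t * c)) := by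
  have := h.isFiniteMeasure
  set s := √(2 * t)
  have hs : s ^ 2 = 2 * t := sq_sqrt (by linarith)
  set b := (1 - c * s ^ 2) / 2
  have hb : 0 < b := by simp only [b, hs]; linarith
  have hK : ENNReal.ofReal √(2 * π) ≠ 0 := by simp [pi_pos]
  refine (ENNReal.mul_le_mul_iff_right hK ENNReal.ofReal_ne_top).mp ?_
  calc ENNReal.ofReal √(2 * π) * ∫⁻ ω, ENNReal.ofReal (exp (t * X ω ^ 2)) ∂μ
      = ∫⁻ ω, (∫⁻ g : ℝ, ENNReal.ofReal (exp (s * X ω * g - g ^ 2 / 2))) ∂μ := by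
        rw [← lintegral_const_mul' _ _ ENNReal.ofReal_ne_top]
        congr with ω
        rw [lintegral_exp_mul_sub_sq_half, ENNReal.ofReal_mul (by positivity), mul_pow, hs]
        ring_nf
    _ = ∫⁻ g : ℝ, ∫⁻ ω, ENNReal.ofReal (exp (s * X ω * g - g ^ 2 / 2)) ∂μ := by
        have hX : AEMeasurable (fun p : Ω × ℝ ↦ X p.1) (μ.prod volume) := h.aemeasurable.comp_fst
        refine lintegral_lintegral_swap ?_
        exact (((hX.const_mul s).mul measurable_snd.aemeasurable).sub
          ((measurable_snd.pow_const 2).div_const 2).aemeasurable).exp.ennreal_ofReal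
    _ ≤ ∫⁻ g : ℝ, ENNReal.ofReal (exp (-b * g ^ 2)) :=
        lintegral_mono (h.lintegral_exp_mul_mul_sub_sq_half_le s)
    _ = ENNReal.ofReal √(π / b) := by
        rw [← ofReal_integral_eq_lintegral_ofReal (integrable_exp_neg_mul_sq hb)
          (ae_of_all _ fun _ ↦ (exp_pos _).le), integral_gaussian]
    _ = ENNReal.ofReal √(2 * π) * ENNReal.ofReal (1 / √(1 - 2 * t * c)) := by
        rw [← ENNReal.ofReal_mul (by positivity), one_div, ← sqrt_inv, ← sqrt_mul (by positivity)]
        simp only [b, hs]; field_simp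

lemma integrable_exp_mul_sq (h : HasSubgaussianMGF X c μ) (ht : 0 ≤ t) (htc : 2 * t * c < 1) :
    Integrable (fun ω ↦ exp (t * X ω ^ 2)) μ := by
  refine ⟨by have := h.aemeasurable; fun_prop, ?_⟩
  rw [hasFiniteIntegral_iff_ofReal (ae_of_all _ fun _ ↦ (exp_pos _).le)]
  exact (h.lintegral_exp_mul_sq_le ht htc).trans_lt ENNReal.ofReal_lt_top

lemma mgf_sq_le (h : HasSubgaussianMGF X c μ) (ht : 0 ≤ t) (htc : 2 * t * c < 1) :
    mgf (fun ω ↦ X ω ^ 2) μ t ≤ 1 / √(1 - 2 * t * c) := by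
  rw [mgf, integral_eq_lintegral_of_nonneg_ae (ae_of_all _ fun _ ↦ (exp_pos _).le)
    (h.integrable_exp_mul_sq ht htc).aestronglyMeasurable]
  exact ENNReal.toReal_le_of_le_ofReal (by positivity) (h.lintegral_exp_mul_sq_le ht htc)

lemma sum_mul_of_iIndepFun {ι : Type*} [Fintype ι] {R : ι → Ω → ℝ} (h_indep : iIndepFun R μ)
    (hR : ∀ i, HasSubgaussianMGF (R i) c μ) (v : ι → ℝ) :
    HasSubgaussianMGF (fun ω ↦ ∑ i, R i ω * v i) ((∑ i, v i ^ 2).toNNReal * c) μ := by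
  have := sum_of_iIndepFun (h_indep.comp (fun i x ↦ v i * x) fun i ↦ by fun_prop)
    (s := Finset.univ) fun i _ ↦ (hR i).const_mul (v i)
  convert this using 1
  · simp [mul_comm]
  · ext
    rw [NNReal.coe_mul, NNReal.coe_sum,
      Real.coe_toNNReal _ (Finset.sum_nonneg fun i _ ↦ sq_nonneg (v i)), Finset.sum_mul]
    rfl

end HasSubgaussianMGF

lemma measureReal_sum_sq_ge_le {ι : Type*} {Z : ι → Ω → ℝ} (h_indep : iIndepFun Z μ)
    (h_meas : ∀ i, Measurable (Z i)) {s : Finset ι} (hZ : ∀ i ∈ s, HasSubgaussianMGF (Z i) c μ)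
    (ht : 0 ≤ t) (htc : 2 * t * c < 1) (ε : ℝ) :
    μ.real {ω | ε ≤ ∑ i ∈ s, Z i ω ^ 2} ≤ exp (-t * ε) * (1 / √(1 - 2 * t * c)) ^ s.card := by
  have := h_indep.isProbabilityMeasure
  have h_indep_sq : iIndepFun (fun i ω ↦ Z i ω ^ 2) μ :=
    h_indep.comp (fun _ x ↦ x ^ 2) fun _ ↦ by fun_prop
  have h_meas_sq (i : ι) : Measurable fun ω ↦ Z i ω ^ 2 := (h_meas i).pow_const 2
  have hsum : (fun ω ↦ ∑ i ∈ s, Z i ω ^ 2) = ∑ i ∈ s, fun ω ↦ Z i ω ^ 2 := by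
    ext; simp only [Finset.sum_apply]
  calc μ.real {ω | ε ≤ ∑ i ∈ s, Z i ω ^ 2}
      ≤ exp (-t * ε) * mgf (fun ω ↦ ∑ i ∈ s, Z i ω ^ 2) μ t := by
        refine measure_ge_le_exp_mul_mgf ε ht ?_
        simpa only [Finset.sum_apply] using h_indep_sq.integrable_exp_mul_sum h_meas_sq fun i hi ↦
          (hZ i hi).integrable_exp_mul_sq ht htc
    _ ≤ exp (-t * ε) * (1 / √(1 - 2 * t * c)) ^ s.card := by
        rw [hsum, h_indep_sq.mgf_sum h_meas_sq, ← Finset.prod_const]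
        gcongr with i hi
        · exact fun _ _ ↦ mgf_nonneg
        · exact (hZ i hi).mgf_sq_le ht htc

lemma measureReal_sum_sq_ge_le_exp {ι : Type*} {Z : ι → Ω → ℝ} (h_indep : iIndepFun Z μ)
    (h_meas : ∀ i, Measurable (Z i)) {s : Finset ι} (hZ : ∀ i ∈ s, HasSubgaussianMGF (Z i) c μ)
    {δ : ℝ} (hδ0 : 0 < δ) (hδc : δ ≤ c) :
    μ.real {ω | s.card * (δ + c) ≤ ∑ i ∈ s, Z i ω ^ 2} ≤ exp (-s.card * δ ^ 2 / (8 * c ^ 2)) := by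
  have hc : 0 < (c : ℝ) := hδ0.trans_le hδc
  -- the maximizer of `t (δ + c) + ½ log (1 - 2tc)`
  set t := δ / (2 * c * (δ + c))
  have htc : 2 * t * c < 1 := by
    rw [show 2 * t * c = δ / (δ + c) by simp only [t]; field_simp, div_lt_one (by positivity)]
    linarith
  calc μ.real {ω | s.card * (δ + c) ≤ ∑ i ∈ s, Z i ω ^ 2}
      ≤ exp (-t * (s.card * (δ + c))) * (1 / √(1 - 2 * t * c)) ^ s.card :=
        measureReal_sum_sq_ge_le h_indep h_meas hZ (by positivity) htc _
    _ = (exp (-t * (δ + c)) * (1 / √(1 - 2 * t * c))) ^ s.card := by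
        rw [mul_pow, ← exp_nat_mul]; ring_nf
    _ ≤ exp (-δ ^ 2 / (8 * c ^ 2)) ^ s.card := by
        gcongr; exact exp_neg_mul_mul_one_div_sqrt_le hc hδ0.le hδc
    _ = exp (-s.card * δ ^ 2 / (8 * c ^ 2)) := by rw [← exp_nat_mul]; ring_nf

end ProbabilityTheory

theorem randomized_misfit_tail_bound_general
    {Ω : Type*} [MeasurableSpace Ω] (μ : Measure Ω) [IsProbabilityMeasure μ]
    (N n : ℕ) (r : Fin n → Fin N → Ω → ℝ)
    (hmeas : ∀ j i, Measurable (r j i))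
    (hindep : iIndepFun (fun p : Fin n × Fin N => r p.1 p.2) μ)
    (hint : ∀ j i (t : ℝ), Integrable (fun ω => Real.exp (t * r j i ω)) μ)
    (hsub : ∀ j i (t : ℝ), ∫ ω, Real.exp (t * r j i ω) ∂μ ≤ Real.exp (t ^ 2 / 2))
    (v : Fin N → ℝ)
    (δ : ℝ) (hδ0 : 0 < δ) (hδ1 : δ ≤ ∑ i, (v i) ^ 2) :
    (μ {ω | δ < (1 / (n : ℝ)) * ∑ j, (∑ i, r j i ω * v i) ^ 2 - ∑ i, (v i) ^ 2}).toReal ≤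
      Real.exp (-(n : ℝ) * δ ^ 2 / (8 * (∑ i, (v i) ^ 2) ^ 2)) := by
  set a := ∑ i, v i ^ 2
  have hc : (a.toNNReal : ℝ) = a := Real.coe_toNNReal _ (hδ0.le.trans hδ1)
  have hr (j : Fin n) (i : Fin N) : HasSubgaussianMGF (r j i) 1 μ :=
    ⟨hint j i, fun t ↦ by simpa [mgf] using hsub j i t⟩
  have hZ (j : Fin n) : HasSubgaussianMGF (fun ω ↦ ∑ i, r j i ω * v i) a.toNNReal μ := by
    simpa using HasSubgaussianMGF.sum_mul_of_iIndepFun (hindep.precomp (Prod.mk_right_injective j))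
      (hr j) v
  have hrows : iIndepFun (fun j ω ↦ ∑ i, r j i ω * v i) μ :=
    (hindep.curry hmeas).comp (fun _ x ↦ ∑ i, x i * v i) fun _ ↦ by fun_prop
  calc μ.real {ω | δ < (1 / (n : ℝ)) * ∑ j, (∑ i, r j i ω * v i) ^ 2 - a}
      ≤ μ.real {ω | n * (δ + a) ≤ ∑ j, (∑ i, r j i ω * v i) ^ 2} :=
        measureReal_mono fun ω ↦ natCast_mul_add_le_of_lt_one_div_mul_sub (by positivity)
    _ ≤ exp (-n * δ ^ 2 / (8 * a ^ 2)) := by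
        simpa [hc] using measureReal_sum_sq_ge_le_exp hrows (fun j ↦ by fun_prop)
          (s := Finset.univ) (fun j _ ↦ hZ j) hδ0 (by rwa [hc])

/-- **Large deviation bound for the randomized misfit with 1-subgaussian entries.**
Let `r 1, ..., r n` be i.i.d. random vectors in `ℝ^N` whose components are (jointly) i.i.d.
real random variables with mean `0`, second moment `1`, and `E[exp (t r)] ≤ exp (t²/2)` for
all `t` (1-subgaussian).  Let `v ∈ ℝ^N` be nonzero.  Then for every `0 < δ ≤ ‖v‖²`,
`P[(1/n) ∑_j (r_j · v)² - ‖v‖² > δ] ≤ exp (-n δ² / (8 ‖v‖⁴))`,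
where `r_j · v = ∑ i, r j i * v i` and `‖v‖² = ∑ i, (v i)²`. -/
theorem randomized_misfit_tail_bound
    {Ω : Type*} [MeasurableSpace Ω] (μ : Measure Ω) [IsProbabilityMeasure μ]
    (N n : ℕ) (hn : 0 < n) (r : Fin n → Fin N → Ω → ℝ)
    (hmeas : ∀ j i, Measurable (r j i))
    (hindep : iIndepFun (fun p : Fin n × Fin N => r p.1 p.2) μ)
    (hident : ∀ p q : Fin n × Fin N, IdentDistrib (r p.1 p.2) (r q.1 q.2) μ μ)
    (hmean : ∀ j i, ∫ ω, r j i ω ∂μ = 0)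
    (hvar : ∀ j i, ∫ ω, (r j i ω) ^ 2 ∂μ = 1)
    (hint : ∀ j i (t : ℝ), Integrable (fun ω => Real.exp (t * r j i ω)) μ)
    (hsub : ∀ j i (t : ℝ), ∫ ω, Real.exp (t * r j i ω) ∂μ ≤ Real.exp (t ^ 2 / 2))
    (v : Fin N → ℝ) (hv : v ≠ 0)
    (δ : ℝ) (hδ0 : 0 < δ) (hδ1 : δ ≤ ∑ i, (v i) ^ 2) :
    (μ {ω | δ < (1 / (n : ℝ)) * ∑ j, (∑ i, r j i ω * v i) ^ 2 - ∑ i, (v i) ^ 2}).toReal ≤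
      Real.exp (-(n : ℝ) * δ ^ 2 / (8 * (∑ i, (v i) ^ 2) ^ 2)) :=
  randomized_misfit_tail_bound_general μ N n r hmeas hindep hint hsub v δ hδ0 hδ1
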